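/- arXiv:1003.5605 — 2 statements merged into one kernel-verified Lean document; each statement's English description precedes it below -/
import Mathlib

section
/- Let α = (α_1,…,α_n) be a composition, let λ and μ be distinct hooks with |λ| = |μ| = h ≤ n + k and arm lengths satisfying λ_a < μ_a ≤ ⌈h/2⌉, and let 0 ≤ k ≤ h. Then the difference s_{S(μ,α;k)} − s_{S(λ,α;k)} is not Schur-positive. In particular, there is a Schur function s_ν appearing in s_{S(λ,α;k)} with positive coefficient which cannot appear in s_{S(μ,α;k)}, because the diagram S(λ,α;k) has more rows than S(μ,α;k). -/
open Finset

namespace SchurStair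

/-- A diagram is a finite set of cells `(row, column)`, with row `0` at the top. -/
abbrev Diagram := Finset (ℕ × ℕ)

/-- `T` is a semistandard filling of `D`: positive entries, rows weakly increase
left to right, columns strictly increase top to bottom. -/
def IsSSYT (D : Diagram) (T : ℕ × ℕ → ℕ) : Prop :=
  (∀ x ∈ D, 1 ≤ T x) ∧
  (∀ i j : ℕ, (i, j) ∈ D → (i, j + 1) ∈ D → T (i, j) ≤ T (i, j + 1)) ∧
  (∀ i j : ℕ, (i, j) ∈ D → (i + 1, j) ∈ D → T (i, j) < T (i + 1, j))

/-- The content of a filling: `content D T v` is the number of cells of `D`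
with entry `v`. -/
def content (D : Diagram) (T : ℕ × ℕ → ℕ) : ℕ → ℕ :=
  fun v => (D.filter fun x => T x = v).card

/-- `y` is read at or before `x` in the reading word
(rows right to left, proceeding from the top row to the bottom). -/
def ReadBefore (x y : ℕ × ℕ) : Prop :=
  y.1 < x.1 ∨ (y.1 = x.1 ∧ x.2 ≤ y.2)

open Classical in
/-- The reading word of `T` on `D` is lattice: in every prefix, the number of
`v+1`'s read is at least the number of `v+2`'s read. -/
def IsLattice (D : Diagram) (T : ℕ × ℕ → ℕ) : Prop :=
  ∀ x ∈ D, ∀ v : ℕ,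
    (D.filter fun y => ReadBefore x y ∧ T y = v + 2).card ≤
      (D.filter fun y => ReadBefore x y ∧ T y = v + 1).card

/-- The semistandard Young tableaux of shape `D` and content `c`
(normalized to be `0` off `D`). -/
def SSYTs (D : Diagram) (c : ℕ → ℕ) : Set ((ℕ × ℕ) → ℕ) :=
  {T | IsSSYT D T ∧ (∀ x ∉ D, T x = 0) ∧ content D T = c}

/-- The SSYT of shape `D` and content `c` whose reading word is lattice. -/
def LatticeSSYTs (D : Diagram) (c : ℕ → ℕ) : Set ((ℕ × ℕ) → ℕ) :=
  {T | T ∈ SSYTs D c ∧ IsLattice D T}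

/-- The coefficient of the monomial `x^c` in the skew Schur function `s_D`. -/
noncomputable def ssytCount (D : Diagram) (c : ℕ → ℕ) : ℕ := (SSYTs D c).ncard

/-- By the Littlewood–Richardson rule, the coefficient of the Schur function
`s_c` in the Schur expansion of `s_D`. -/
noncomputable def lrCount (D : Diagram) (c : ℕ → ℕ) : ℕ := (LatticeSSYTs D c).ncard

/-- `s_{D₁} - s_{D₂}` is Schur-positive (phrased via the LR rule). -/
def SchurPos (D₁ D₂ : Diagram) : Prop := ∀ c : ℕ → ℕ, lrCount D₂ c ≤ lrCount D₁ c

/-- `α` encodes a composition `(α_1, …, α_n)`: the 1-based part `α_i` is `α (i-1)`. -/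
def IsComposition (n : ℕ) (α : ℕ → ℕ) : Prop := ∀ i < n, 0 < α i

/-- Height of column `c` (0-based) of the staircase `δ_α`. -/
def stairColHt (n : ℕ) (α : ℕ → ℕ) (c : ℕ) : ℕ := ∑ i ∈ Finset.Ico c n, α i

/-- The number of rows `|α|` of the fat staircases `δ_α`, `Δ_α`. -/
def stairLen (n : ℕ) (α : ℕ → ℕ) : ℕ := ∑ i ∈ Finset.range n, α i

/-- Row lengths of the staircase partition `δ_α = (n^{α_n}, …, 1^{α_1})`. -/
def deltaPart (n : ℕ) (α : ℕ → ℕ) : ℕ → ℕ :=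
  fun r => ((Finset.range n).filter fun c => r < stairColHt n α c).card

/-- The rotated fat staircase `Δ_α`, inside its `|α| × n` bounding box. -/
def deltaUp (n : ℕ) (α : ℕ → ℕ) : Diagram :=
  (Finset.range (stairLen n α) ×ˢ Finset.range n).filter fun x =>
    stairLen n α ≤ x.1 + stairColHt n α (n - 1 - x.2)

/-- Cells of a partition `lam` (with at most `m` parts), top-left justified. -/
def partCells (m : ℕ) (lam : ℕ → ℕ) : Diagram :=
  (Finset.range m ×ˢ Finset.range (lam 0)).filter fun x => x.2 < lam x.1

/-- Translate a diagram down by `dr` and right by `dc`. -/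
def shiftD (D : Diagram) (dr dc : ℕ) : Diagram := D.image fun x => (x.1 + dr, x.2 + dc)

/-- The fat staircase with bad foundation `S(λ, α; k)`: the foundation `lam`
(at most `m` parts) is placed immediately below `Δ_α`, its first row beginning
one box below and `k` boxes left of the bottom-left box of `Δ_α`, so that
the rows overlap in `lam 0 - k` column positions. -/
def shapeS (n : ℕ) (α : ℕ → ℕ) (m : ℕ) (lam : ℕ → ℕ) (k : ℕ) : Diagram :=
  shiftD (deltaUp n α) 0 k ∪ shiftD (partCells m lam) (stairLen n α) 0

/-- The direct sum `λ ⊕ Δ_α` (disconnected, `λ` to the lower left). -/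
def dsumS (n : ℕ) (α : ℕ → ℕ) (m : ℕ) (lam : ℕ → ℕ) : Diagram :=
  shiftD (deltaUp n α) 0 (lam 0) ∪ shiftD (partCells m lam) (stairLen n α) 0

/-- The hook `(a, 1^{l-1})` as a partition. -/
def hookPart (a l : ℕ) : ℕ → ℕ :=
  fun i => if i = 0 then a else if i < l then 1 else 0

/-- The set `R_{α,k}` of possible first-row foundation entries:
`{1 + α_n + ⋯ + α_{n+1-j} : 1 ≤ j ≤ n}`, together with `1` when `k > 0`. -/
def Rfin (n : ℕ) (α : ℕ → ℕ) (k : ℕ) : Finset ℕ :=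
  ((Finset.Icc 1 n).image fun j => 1 + ∑ i ∈ Finset.Ico (n - j) n, α i) ∪
    (if 0 < k then {1} else ∅)

/-- The complement `p^c` of a partition `p` in the rectangle `(b^a)`
(`a` rows of width `b`): the 180° rotation of `(b^a) / p`. -/
def complementPart (a b : ℕ) (p : ℕ → ℕ) : ℕ → ℕ :=
  fun i => if i < a then b - p (a - 1 - i) else 0

/-- Cells of the skew diagram `p / q`, where `p` has at most `a` parts. -/
def skewCells (a : ℕ) (p q : ℕ → ℕ) : Diagram :=
  (Finset.range a ×ˢ Finset.range (p 0)).filter fun x => q x.1 ≤ x.2 ∧ x.2 < p x.1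

/-- Extend a tuple `Fin a → Fin (b+1)` to a function `ℕ → ℕ` (zero beyond `a`);
used to enumerate the partitions contained in the rectangle `(b^a)`. -/
def extFun (a b : ℕ) (f : Fin a → Fin (b + 1)) : ℕ → ℕ :=
  fun i => if h : i < a then (f ⟨i, h⟩ : ℕ) else 0

/-- The content function of a partition `p`: the entry `v ≥ 1` occurs `p (v-1)` times. -/
def partContent (p : ℕ → ℕ) : ℕ → ℕ := fun v => if v = 0 then 0 else p (v - 1)

open Classical in
/-- The Littlewood–Richardson coefficient `c^ν_{κσ}` (with `ν` a partition of at
most `a` parts): the number of lattice SSYT of shape `ν/κ` and content `σ`. -/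
noncomputable def lrCoeff (a : ℕ) (ν κ : ℕ → ℕ) (σ : ℕ → ℕ) : ℕ :=
  if ∀ i, κ i ≤ ν i then lrCount (skewCells a ν κ) σ else 0

open Classical in
/-- The truncated complement, in the rectangle `(b^a)`, of the symmetric function
with Schur coefficient family `F`: `c(∑_ν F(ν) s_ν) = ∑_{ν ⊆ (b^a)} F(ν) s_{ν^c}`,
expressed as a monomial-coefficient (content-counting) function. -/
noncomputable def truncComplement (a b : ℕ) (F : (ℕ → ℕ) → ℕ) : (ℕ → ℕ) → ℕ :=
  fun c => ∑ ν : Fin a → Fin (b + 1),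
    if Antitone (extFun a b ν) then
      F (extFun a b ν) *
        ssytCount (skewCells a (complementPart a b (extFun a b ν)) fun _ => 0) c
    else 0

/-- `D` is a skew diagram: row `i` occupies the columns `g i ≤ j < f i` for
nested partitions `g ⊆ f`. -/
def IsSkew (D : Diagram) : Prop :=
  ∃ f g : ℕ → ℕ, Antitone f ∧ Antitone g ∧ (∀ i, g i ≤ f i) ∧
    ∀ x : ℕ × ℕ, x ∈ D ↔ g x.1 ≤ x.2 ∧ x.2 < f x.1

/-- One more than the largest row index of `D`. -/
def diagHeight (D : Diagram) : ℕ := D.sup fun x => x.1 + 1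

/-- One more than the largest column index of `D`. -/
def diagWidth (D : Diagram) : ℕ := D.sup fun x => x.2 + 1

/-- The direct sum `D₁ ⊕ D₂`: `D₂` placed above and to the right of `D₁`. -/
def directSum (D₁ D₂ : Diagram) : Diagram :=
  shiftD D₁ (diagHeight D₂) 0 ∪ shiftD D₂ 0 (diagWidth D₁)

/-- The 180° rotation `D°` of a diagram (within its bounding box). -/
def rotateD (D : Diagram) : Diagram :=
  D.image fun x => (diagHeight D - 1 - x.1, diagWidth D - 1 - x.2)

end SchurStair

/-!
In a lattice semistandard filling of a diagram whose rows are intervals, every entry of row `r`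
(counted from `0`) is at most `r + 1`, so no `s_ν` occurring in `s_D` has more parts than `D`
has rows. `S(λ, α; k)` has a lattice filling using the entry `|α| + ℓ(λ)` at the foot of the leg
of `λ`, while `S(μ, α; k)` has only `|α| + ℓ(μ) < |α| + ℓ(λ)` rows.
-/

namespace SchurStair

section Diagrams

variable {D : Diagram} {T : ℕ × ℕ → ℕ}

def IsRowConvex (D : Diagram) : Prop :=
  ∀ i j₁ j j₂ : ℕ, (i, j₁) ∈ D → (i, j₂) ∈ D → j₁ ≤ j → j ≤ j₂ → (i, j) ∈ D

lemma IsSSYT.row_mono (hT : IsSSYT D T) (hD : IsRowConvex D) {i j₁ j₂ : ℕ}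
    (h₁ : (i, j₁) ∈ D) (h₂ : (i, j₂) ∈ D) (hj : j₁ ≤ j₂) : T (i, j₁) ≤ T (i, j₂) := by
  induction j₂, hj using Nat.le_induction with
  | base => rfl
  | succ j hj ih =>
    have hmem : (i, j) ∈ D := hD i j₁ j (j + 1) h₁ h₂ hj (Nat.le_succ j)
    exact (ih hmem).trans (hT.2.1 i j hmem h₂)

/-- The entry `v + 2` needs an earlier `v + 1`; within its own row only weakly smaller
entries precede it, so the `v + 1` lies in a row above. -/
lemma IsLattice.le_row_add_one (hL : IsLattice D T) (hT : IsSSYT D T) (hD : IsRowConvex D)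
    {x : ℕ × ℕ} (hx : x ∈ D) : T x ≤ x.1 + 1 := by
  classical
  suffices ∀ v, ∀ x ∈ D, T x = v + 1 → v ≤ x.1 by
    have := this (T x - 1) x hx
    omega
  intro v
  induction v with
  | zero => intros; exact Nat.zero_le _
  | succ v ih =>
    intro x hx hTx
    have hx' : x ∈ D.filter fun y => ReadBefore x y ∧ T y = v + 2 :=
      Finset.mem_filter.mpr ⟨hx, Or.inr ⟨rfl, le_rfl⟩, hTx⟩
    obtain ⟨y, hy⟩ := Finset.card_pos.mp ((Finset.card_pos.mpr ⟨x, hx'⟩).trans_le (hL x hx v))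
    obtain ⟨hyD, hyR, hyT⟩ := Finset.mem_filter.mp hy
    rcases hyR with hrow | ⟨hrow, hcol⟩
    · have := ih y hyD hyT
      omega
    · have hmono := hT.row_mono hD (i := x.1) (j₁ := x.2) (j₂ := y.2) hx
        (by rw [← hrow]; exact hyD) hcol
      rw [show (x.1, y.2) = y from Prod.ext hrow.symm rfl, hTx, hyT] at hmono
      omega

lemma content_pos_of_mem {x : ℕ × ℕ} (hx : x ∈ D) : 0 < content D T (T x) :=
  Finset.card_pos.mpr ⟨x, Finset.mem_filter.mpr ⟨hx, rfl⟩⟩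

lemma lt_diagHeight {x : ℕ × ℕ} (hx : x ∈ D) : x.1 < diagHeight D :=
  Finset.le_sup (f := fun x : ℕ × ℕ => x.1 + 1) hx

lemma le_diagHeight_of_mem_latticeSSYTs (hD : IsRowConvex D) {c : ℕ → ℕ}
    (hT : T ∈ LatticeSSYTs D c) (x : ℕ × ℕ) : T x ≤ diagHeight D := by
  by_cases hx : x ∈ D
  · exact (hT.2.le_row_add_one hT.1.1 hD hx).trans (lt_diagHeight hx)
  · rw [hT.1.2.1 x hx]
    exact Nat.zero_le _

lemma latticeSSYTs_finite (hD : IsRowConvex D) (c : ℕ → ℕ) : (LatticeSSYTs D c).Finite := by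
  refine Set.Finite.of_finite_image (f := fun T (x : D) => T x) ?_ ?_
  · refine (Set.Finite.pi' fun _ => Set.finite_Iic (diagHeight D)).subset ?_
    rintro _ ⟨T, hT, rfl⟩ x
    exact le_diagHeight_of_mem_latticeSSYTs hD hT x
  · intro T hT T' hT' hTT'
    funext x
    by_cases hx : x ∈ D
    · exact congrFun hTT' ⟨x, hx⟩
    · rw [hT.1.2.1 x hx, hT'.1.2.1 x hx]

lemma lrCount_pos (hD : IsRowConvex D) {c : ℕ → ℕ} (hT : T ∈ LatticeSSYTs D c) :
    0 < lrCount D c :=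
  (Set.ncard_pos (latticeSSYTs_finite hD c)).mpr ⟨T, hT⟩

lemma lrCount_eq_zero_of_diagHeight_lt (hD : IsRowConvex D) {c : ℕ → ℕ} {w : ℕ}
    (hw : diagHeight D < w) (hc : 0 < c w) : lrCount D c = 0 := by
  suffices LatticeSSYTs D c = ∅ by rw [lrCount, this, Set.ncard_empty]
  refine Set.eq_empty_of_forall_notMem fun T hT => ?_
  have hcw : 0 < (D.filter fun x => T x = w).card := by
    rw [← congrFun hT.1.2.2 w] at hc
    exact hc
  obtain ⟨x, hx⟩ := Finset.card_pos.mp hcw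
  have := le_diagHeight_of_mem_latticeSSYTs hD hT x
  rw [(Finset.mem_filter.mp hx).2] at this
  omega

lemma isLattice_of_injOn (φ : ℕ × ℕ → ℕ × ℕ)
    (hφ : ∀ y ∈ D, 2 ≤ T y → φ y ∈ D ∧ T (φ y) + 1 = T y ∧ (φ y).1 < y.1)
    (hinj : Set.InjOn φ {y | y ∈ D ∧ 2 ≤ T y}) : IsLattice D T := by
  classical
  intro x _ v
  refine Finset.card_le_card_of_injOn φ (fun y hy => ?_) fun y hy y' hy' => ?_
  · obtain ⟨hyD, hyR, hyT⟩ := Finset.mem_filter.mp hy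
    obtain ⟨hφD, hφT, hφrow⟩ := hφ y hyD (by omega)
    refine Finset.mem_filter.mpr ⟨hφD, Or.inl ?_, by omega⟩
    rcases hyR with h | ⟨h, -⟩ <;> omega
  · obtain ⟨hyD, -, hyT⟩ := Finset.mem_filter.mp hy
    obtain ⟨hyD', -, hyT'⟩ := Finset.mem_filter.mp hy'
    exact hinj ⟨hyD, by omega⟩ ⟨hyD', by omega⟩

end Diagrams

section Staircase

variable {n k m : ℕ} {α lam : ℕ → ℕ}

lemma stairColHt_antitone : Antitone (stairColHt n α) :=
  fun _ _ hab => Finset.sum_le_sum_of_subset (Finset.Ico_subset_Ico hab le_rfl)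

lemma stairColHt_zero : stairColHt n α 0 = stairLen n α := by
  rw [stairColHt, stairLen, Finset.range_eq_Ico]

lemma stairColHt_le_stairLen {c : ℕ} : stairColHt n α c ≤ stairLen n α :=
  stairColHt_zero (n := n) (α := α) ▸ stairColHt_antitone (Nat.zero_le c)

lemma pos_of_stairLen_pos (h : 0 < stairLen n α) : 0 < n := by
  rcases Nat.eq_zero_or_pos n with rfl | hn
  · simp [stairLen] at h
  · exact hn

lemma mem_shiftD {D : Diagram} {dr dc : ℕ} {x : ℕ × ℕ} :
    x ∈ shiftD D dr dc ↔ dr ≤ x.1 ∧ dc ≤ x.2 ∧ (x.1 - dr, x.2 - dc) ∈ D := by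
  simp only [shiftD, Finset.mem_image]
  constructor
  · rintro ⟨y, hy, rfl⟩
    simpa using hy
  · rintro ⟨h₁, h₂, h₃⟩
    exact ⟨_, h₃, Prod.ext (Nat.sub_add_cancel h₁) (Nat.sub_add_cancel h₂)⟩

lemma mem_shapeS {x : ℕ × ℕ} :
    x ∈ shapeS n α m lam k ↔
      (x.1 < stairLen n α ∧ k ≤ x.2 ∧ x.2 - k < n ∧
        stairLen n α ≤ x.1 + stairColHt n α (n - 1 - (x.2 - k))) ∨
      (stairLen n α ≤ x.1 ∧ x.1 - stairLen n α < m ∧ x.2 < lam 0 ∧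
        x.2 < lam (x.1 - stairLen n α)) := by
  simp only [shapeS, deltaUp, partCells, Finset.mem_union, mem_shiftD, Finset.mem_filter,
    Finset.mem_product, Finset.mem_range, zero_le, Nat.sub_zero, true_and]
  tauto

lemma isRowConvex_shapeS : IsRowConvex (shapeS n α m lam k) := by
  intro i j₁ j j₂ h₁ h₂ hj₁ hj₂
  rw [mem_shapeS] at h₁ h₂ ⊢
  dsimp only at h₁ h₂ ⊢
  rcases h₁ with ⟨g₁, g₂, g₃, g₄⟩ | ⟨g₁, g₂, g₃, g₄⟩ <;>
    rcases h₂ with ⟨f₁, f₂, f₃, f₄⟩ | ⟨f₁, f₂, f₃, f₄⟩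
  · have := stairColHt_antitone (n := n) (α := α)
      (show n - 1 - (j - k) ≤ n - 1 - (j₁ - k) by omega)
    exact Or.inl ⟨g₁, by omega, by omega, by omega⟩
  all_goals omega

lemma diagHeight_shapeS_le : diagHeight (shapeS n α m lam k) ≤ stairLen n α + m :=
  Finset.sup_le fun x hx => by rcases mem_shapeS.mp hx with h | h <;> omega

end Staircase

section Hook

variable {n k a l : ℕ} {α : ℕ → ℕ}

lemma mem_shapeS_hookPart (ha : 1 ≤ a) (hl : 1 ≤ l) {x : ℕ × ℕ} :
    x ∈ shapeS n α l (hookPart a l) k ↔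
      (x.1 < stairLen n α ∧ k ≤ x.2 ∧ x.2 - k < n ∧
        stairLen n α ≤ x.1 + stairColHt n α (n - 1 - (x.2 - k))) ∨
      (x.1 = stairLen n α ∧ x.2 < a) ∨
      (stairLen n α < x.1 ∧ x.1 < stairLen n α + l ∧ x.2 = 0) := by
  rw [mem_shapeS]
  simp only [hookPart]
  split_ifs <;> omega

variable (n k a l α) in
/-- The filling of `S((a, 1^{l-1}), α; k)`: the staircase columns and the arm row below them
count `1, 2, …` downwards, the last arm cell continues the rightmost staircase column with
`|α| + 1`, and the leg continues that with `|α| + 2, …, |α| + l`. -/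
def hookFill : ℕ × ℕ → ℕ := fun x =>
  if x ∈ shapeS n α l (hookPart a l) k then
    if x.1 < stairLen n α then x.1 + stairColHt n α (n - 1 - (x.2 - k)) + 1 - stairLen n α
    else if x.1 = stairLen n α ∧ x.2 + 1 ≠ a then
      (if x.2 < k then 1 else stairColHt n α (n - 1 - (x.2 - k)) + 1)
    else x.1 + 1
  else 0

variable (n k a α) in
/-- Matches each entry `v + 2` of `hookFill` with an entry `v + 1` in a higher row: the cell
above, except at the end of the arm and at the top of the leg. -/
def hookPred : ℕ × ℕ → ℕ × ℕ := fun y =>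
  if y.1 = stairLen n α ∧ y.2 + 1 = a then (stairLen n α - 1, k + n - 1)
  else if y.1 = stairLen n α + 1 then (stairLen n α, a - 1)
  else (y.1 - 1, y.2)

lemma hookFill_isSSYT (ha : 1 ≤ a) (hl : 1 ≤ l) :
    IsSSYT (shapeS n α l (hookPart a l) k) (hookFill n k a l α) := by
  refine ⟨fun x hx => ?_, fun i j h₁ h₂ => ?_, fun i j h₁ h₂ => ?_⟩
  · have := (mem_shapeS_hookPart ha hl).mp hx
    simp only [hookFill, if_pos hx]
    split_ifs <;> omega
  · have m₁ := (mem_shapeS_hookPart ha hl).mp h₁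
    have m₂ := (mem_shapeS_hookPart ha hl).mp h₂
    have := stairColHt_antitone (n := n) (α := α)
      (show n - 1 - (j + 1 - k) ≤ n - 1 - (j - k) by omega)
    have := stairColHt_le_stairLen (n := n) (α := α) (c := n - 1 - (j - k))
    simp only [hookFill, if_pos h₁, if_pos h₂] at m₁ m₂ ⊢
    split_ifs <;> omega
  · have m₁ := (mem_shapeS_hookPart ha hl).mp h₁
    have m₂ := (mem_shapeS_hookPart ha hl).mp h₂
    have := stairColHt_le_stairLen (n := n) (α := α) (c := n - 1 - (j - k))
    simp only [hookFill, if_pos h₁, if_pos h₂] at m₁ m₂ ⊢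
    split_ifs <;> omega

lemma hookPred_spec (ha : 1 ≤ a) (hl : 1 ≤ l) (hak : a ≤ n + k)
    {y : ℕ × ℕ} (hy : y ∈ shapeS n α l (hookPart a l) k) (h2 : 2 ≤ hookFill n k a l α y) :
    hookPred n k a α y ∈ shapeS n α l (hookPart a l) k ∧
      hookFill n k a l α (hookPred n k a α y) + 1 = hookFill n k a l α y ∧
      (hookPred n k a α y).1 < y.1 := by
  have m := (mem_shapeS_hookPart ha hl).mp hy
  have hC := stairColHt_le_stairLen (n := n) (α := α) (c := n - 1 - (y.2 - k))
  have hC₀ : stairColHt n α (n - 1 - (k + n - 1 - k)) = stairLen n α := by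
    rw [show n - 1 - (k + n - 1 - k) = 0 by omega, stairColHt_zero]
  have hn : 0 < stairLen n α → 0 < n := pos_of_stairLen_pos
  simp only [hookFill, if_pos hy] at h2
  unfold hookPred
  split_ifs
  all_goals
    refine (fun hz => ⟨hz, ?_, by dsimp only; split_ifs at h2 <;> omega⟩)
      ((mem_shapeS_hookPart ha hl).mpr (by dsimp only; split_ifs at h2 <;> omega))
    simp only [hookFill, if_pos hy, if_pos hz]
    split_ifs at h2 ⊢ <;> omega

lemma hookPred_injOn (ha : 1 ≤ a) (hl : 1 ≤ l) (hak : a ≤ n + k) :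
    Set.InjOn (hookPred n k a α)
      {y | y ∈ shapeS n α l (hookPart a l) k ∧ 2 ≤ hookFill n k a l α y} := by
  rintro y ⟨hy, h2⟩ y' ⟨hy', h2'⟩ heq
  have r := (hookPred_spec ha hl hak hy h2).2.2
  have r' := (hookPred_spec ha hl hak hy' h2').2.2
  have m := (mem_shapeS_hookPart ha hl).mp hy
  have m' := (mem_shapeS_hookPart ha hl).mp hy'
  unfold hookPred at heq r r'
  split_ifs at heq r r' <;> simp only [Prod.mk.injEq] at heq <;>
    exact Prod.ext (by omega) (by omega)

lemma hookFill_mem_latticeSSYTs (ha : 1 ≤ a) (hl : 1 ≤ l) (hak : a ≤ n + k) :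
    hookFill n k a l α ∈ LatticeSSYTs (shapeS n α l (hookPart a l) k)
      (content (shapeS n α l (hookPart a l) k) (hookFill n k a l α)) :=
  ⟨⟨hookFill_isSSYT ha hl, fun _ hx => by simp only [hookFill, if_neg hx], rfl⟩,
    isLattice_of_injOn _ (fun _ hy h2 => hookPred_spec ha hl hak hy h2)
      (hookPred_injOn ha hl hak)⟩

lemma hookFill_legEnd (ha : 1 ≤ a) (hl : 2 ≤ l) :
    (stairLen n α + l - 1, 0) ∈ shapeS n α l (hookPart a l) k ∧
      hookFill n k a l α (stairLen n α + l - 1, 0) = stairLen n α + l := by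
  have hx : (stairLen n α + l - 1, 0) ∈ shapeS n α l (hookPart a l) k :=
    (mem_shapeS_hookPart ha (by omega)).mpr (by dsimp only; omega)
  refine ⟨hx, ?_⟩
  simp only [hookFill, if_pos hx]
  split_ifs <;> omega

end Hook

theorem antichain_one_general (n k h la ll ma ml : ℕ) (α : ℕ → ℕ)
    (hla : 1 ≤ la) (hml : 1 ≤ ml)
    (hsl : la + ll = h + 1) (hsm : ma + ml = h + 1)
    (hlt : la < ma)
    (hh : h ≤ n + k) :
    ¬ SchurPos (shapeS n α ml (hookPart ma ml) k) (shapeS n α ll (hookPart la ll) k) ∧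
      ∃ c : ℕ → ℕ, 0 < lrCount (shapeS n α ll (hookPart la ll) k) c ∧
        lrCount (shapeS n α ml (hookPart ma ml) k) c = 0 := by
  set c := content (shapeS n α ll (hookPart la ll) k) (hookFill n k la ll α)
  have hT := hookFill_mem_latticeSSYTs (n := n) (k := k) (α := α) hla (l := ll)
    (by omega) (by omega)
  obtain ⟨hx, hval⟩ := hookFill_legEnd (n := n) (k := k) (α := α) hla (l := ll) (by omega)
  have hc : 0 < c (stairLen n α + ll) := hval ▸ content_pos_of_mem hx
  have hpos : 0 < lrCount (shapeS n α ll (hookPart la ll) k) c :=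
    lrCount_pos isRowConvex_shapeS hT
  have hzero : lrCount (shapeS n α ml (hookPart ma ml) k) c = 0 :=
    lrCount_eq_zero_of_diagHeight_lt isRowConvex_shapeS
      (diagHeight_shapeS_le.trans_lt (by omega)) hc
  exact ⟨fun hsp => by have := hsp c; omega, c, hpos, hzero⟩

/-- For distinct hooks `λ, μ` of size `h ≤ n + k` with arm lengths
`λ_a < μ_a ≤ ⌈h/2⌉` and `0 ≤ k ≤ h`, the difference `s_{S(μ,α;k)} − s_{S(λ,α;k)}`
is not Schur-positive; indeed some `s_ν` occurs in `s_{S(λ,α;k)}` but not in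
`s_{S(μ,α;k)}`. -/
theorem antichain_one (n k h la ll ma ml : ℕ) (α : ℕ → ℕ) (hα : IsComposition n α)
    (hla : 1 ≤ la) (hll : 1 ≤ ll) (hma : 1 ≤ ma) (hml : 1 ≤ ml)
    (hsl : la + ll = h + 1) (hsm : ma + ml = h + 1)
    (hlt : la < ma) (hhalf : ma ≤ (h + 1) / 2)
    (hh : h ≤ n + k) (hkh : k ≤ h) :
    ¬ SchurPos (shapeS n α ml (hookPart ma ml) k) (shapeS n α ll (hookPart la ll) k) ∧
      ∃ c : ℕ → ℕ, 0 < lrCount (shapeS n α ll (hookPart la ll) k) c ∧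
        lrCount (shapeS n α ml (hookPart ma ml) k) c = 0 :=
  antichain_one_general n k h la ll ma ml α hla hml hsl hsm hlt hh

end SchurStair
end

section
/- Let α = (α_1,…,α_n) be a composition, 0 ≤ k ≤ 1, λ a partition, and w = n + k. Then, for complementation in any rectangle of width w (and appropriate height), c(s_λ · s_{Δ_α}) = c(s_{S(λ,α;k)}), where c is the truncated complement operator in that rectangle. -/
open Finset

/-!
Sliding `Δ_α` horizontally while keeping the foundation fixed leaves the reading word unchanged,
so it is a bijection between lattice SSYT of the two shapes as soon as it keeps columns strict
where `Δ_α` meets the first foundation row. In the direct sum they do not meet. In a lattice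
SSYT, column `c` of `Δ_α` reads `1, …, h_c` from the top, `h_c` its height, so all `n` columns
hold a `1`; as the content `ν` fits in width `n + k`, there are at most `n + k` ones, hence
at most `k` in the foundation row. The lattice condition then forces the foundation entries
from column `k` on to be `h_c + 1` for strictly increasing `c`, hence each one exceeds the
bottom entry of the column of `Δ_α` above it when `Δ_α` starts in column `k`, as in
`S(λ, α; k)`.
-/

namespace SchurStair

open Classical

section Staircase

variable {n : ℕ} {α : ℕ → ℕ}

/-- The height of column `c` of `Δ_α`, columns counted from the left. -/
def colHeight (n : ℕ) (α : ℕ → ℕ) (c : ℕ) : ℕ := stairColHt n α (n - 1 - c)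

lemma colHeight_mono : Monotone (colHeight n α) := fun c c' h => by
  unfold colHeight stairColHt
  exact sum_le_sum_of_subset (Ico_subset_Ico (by omega) le_rfl)

lemma colHeight_le_stairLen (c : ℕ) : colHeight n α c ≤ stairLen n α := by
  rw [colHeight, stairColHt, stairLen, range_eq_Ico]
  exact sum_le_sum_of_subset (Ico_subset_Ico (Nat.zero_le _) le_rfl)

lemma colHeight_strictMonoOn (hα : IsComposition n α) :
    StrictMonoOn (colHeight n α) (Set.Iio n) := by
  intro c hc c' hc' h
  simp only [Set.mem_Iio] at hc hc'
  rw [colHeight, colHeight, stairColHt, stairColHt,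
    ← sum_Ico_consecutive α (by omega : n - 1 - c' ≤ n - 1 - c) (by omega : n - 1 - c ≤ n)]
  have := single_le_sum (f := α) (fun _ _ => Nat.zero_le _)
    (left_mem_Ico.mpr (by omega : n - 1 - c' < n - 1 - c))
  have := hα (n - 1 - c') (by omega)
  omega

lemma colHeight_pos (hα : IsComposition n α) {c : ℕ} (hc : c < n) : 0 < colHeight n α c := by
  rw [colHeight, stairColHt]
  exact lt_of_lt_of_le (hα (n - 1) (by omega))
    (single_le_sum (fun _ _ => Nat.zero_le _) (by simp only [mem_Ico]; omega))

lemma mem_deltaUp {x : ℕ × ℕ} :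
    x ∈ deltaUp n α ↔ x.1 < stairLen n α ∧ x.2 < n ∧ stairLen n α ≤ x.1 + colHeight n α x.2 := by
  simp only [deltaUp, colHeight, mem_filter, mem_product, mem_range]
  tauto

end Staircase

/-- `Δ_α`, shifted `p` columns to the right, on top of the diagram `B`. -/
def stairOver (n : ℕ) (α : ℕ → ℕ) (B : Diagram) (p : ℕ) : Diagram :=
  shiftD (deltaUp n α) 0 p ∪ shiftD B (stairLen n α) 0

section StairOver

variable {n : ℕ} {α : ℕ → ℕ} {B : Diagram} {p : ℕ}

lemma mem_stairOver {x : ℕ × ℕ} :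
    x ∈ stairOver n α B p ↔
      (x.1 < stairLen n α ∧ p ≤ x.2 ∧ x.2 - p < n ∧
        stairLen n α ≤ x.1 + colHeight n α (x.2 - p)) ∨
      (stairLen n α ≤ x.1 ∧ (x.1 - stairLen n α, x.2) ∈ B) := by
  obtain ⟨r, j⟩ := x
  simp only [stairOver, shiftD, mem_union, mem_image, mem_deltaUp, Prod.exists, Prod.mk.injEq]
  constructor
  · rintro (⟨r', j', h, rfl, rfl⟩ | ⟨r', j', h, rfl, rfl⟩)
    · left; simpa using h
    · right; simpa using h
  · rintro (⟨h1, h2, h3⟩ | ⟨h1, h2⟩)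
    · exact Or.inl ⟨r, j - p, ⟨h1, h3⟩, by omega, by omega⟩
    · exact Or.inr ⟨r - stairLen n α, j, h2, by omega, rfl⟩

lemma stair_mem_stairOver {r c : ℕ} (hr : r < stairLen n α) (hc : c < n)
    (hrc : stairLen n α ≤ r + colHeight n α c) : (r, c + p) ∈ stairOver n α B p :=
  mem_stairOver.mpr (Or.inl ⟨hr, by simp, by simpa using hc, by simpa using hrc⟩)

lemma mem_stairOver_of_lt_stairLen {r j : ℕ} (h : (r, j) ∈ stairOver n α B p)
    (hr : r < stairLen n α) :
    p ≤ j ∧ j - p < n ∧ stairLen n α ≤ r + colHeight n α (j - p) := by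
  rcases mem_stairOver.mp h with h | h
  · exact h.2
  · exact absurd h.1 (by simpa using hr)

lemma foundation_mem_stairOver {j : ℕ} (h : (0, j) ∈ B) :
    (stairLen n α, j) ∈ stairOver n α B p :=
  mem_stairOver.mpr (Or.inr ⟨le_rfl, by simpa using h⟩)

end StairOver

section Tableaux

variable {D : Diagram} {T : ℕ × ℕ → ℕ}

lemma IsSSYT.row_mono_s14 (hT : IsSSYT D T) {i j j' : ℕ} (hjj' : j ≤ j')
    (hrow : ∀ t, j ≤ t → t ≤ j' → (i, t) ∈ D) : T (i, j) ≤ T (i, j') := by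
  induction j', hjj' using Nat.le_induction with
  | base => exact le_rfl
  | succ j' hj ih =>
    exact (ih fun t h1 h2 => hrow t h1 (by omega)).trans
      (hT.2.1 i j' (hrow _ hj (by omega)) (hrow _ (by omega) le_rfl))

/-- The number of entries `v` in the reading word of `T` up to and including the cell `x`. -/
noncomputable def countUpTo (D : Diagram) (T : ℕ × ℕ → ℕ) (x : ℕ × ℕ) (v : ℕ) : ℕ :=
  #(D.filter fun y => ReadBefore x y ∧ T y = v)

lemma IsLattice.countUpTo_le (hlat : IsLattice D T) {x : ℕ × ℕ} (hx : x ∈ D) {v : ℕ}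
    (hv : 2 ≤ v) : countUpTo D T x v ≤ countUpTo D T x (v - 1) := by
  have := hlat x hx (v - 2)
  rwa [show v - 2 + 2 = v by omega, show v - 2 + 1 = v - 1 by omega] at this

end Tableaux

section Canonical

variable {n : ℕ} {α : ℕ → ℕ} {B : Diagram} {p : ℕ} {T : ℕ × ℕ → ℕ}

lemma stair_row_mono (hT : IsSSYT (stairOver n α B p) T) {r c c' : ℕ} (hcc' : c ≤ c')
    (hc' : c' < n) (hr : r < stairLen n α) (hrc : stairLen n α ≤ r + colHeight n α c) :
    T (r, c + p) ≤ T (r, c' + p) :=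
  hT.row_mono_s14 (by omega) fun t h1 h2 => by
    have : colHeight n α c ≤ colHeight n α (t - p) := colHeight_mono (by omega)
    have h : (r, t - p + p) ∈ stairOver n α B p := stair_mem_stairOver hr (by omega) (by omega)
    rwa [Nat.sub_add_cancel (by omega)] at h

lemma fst_lt_of_readBefore (hT : IsSSYT (stairOver n α B p) T) {r c : ℕ}
    (hr : r < stairLen n α) (hrc : stairLen n α ≤ r + colHeight n α c) {y : ℕ × ℕ}
    (hy : y ∈ stairOver n α B p) (hxy : ReadBefore (r, c + p) y) (hlt : T y < T (r, c + p)) :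
    y.1 < r := by
  obtain ⟨ry, j⟩ := y
  dsimp only [ReadBefore] at hxy ⊢
  rcases hxy with h | ⟨rfl, h⟩
  · exact h
  obtain ⟨-, hjn, -⟩ := mem_stairOver_of_lt_stairLen hy hr
  have := stair_row_mono hT (c' := j - p) (by omega) hjn hr hrc
  rw [Nat.sub_add_cancel (by omega)] at this
  omega

/-- `stair_entry_eq` holds at the cells read before `(r, c + p)`. -/
def CanonicalBefore (n : ℕ) (α : ℕ → ℕ) (p : ℕ) (T : ℕ × ℕ → ℕ) (r c : ℕ) : Prop :=
  ∀ r' c', r' < stairLen n α → c' < n → stairLen n α ≤ r' + colHeight n α c' →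
    (r' < r ∨ r' = r ∧ c < c') → T (r', c' + p) = r' + colHeight n α c' + 1 - stairLen n α

lemma le_stair_entry (hT : IsSSYT (stairOver n α B p) T) {r c : ℕ}
    (hr : r < stairLen n α) (hc : c < n) (hrc : stairLen n α ≤ r + colHeight n α c)
    (ih : CanonicalBefore n α p T r c) :
    r + colHeight n α c + 1 - stairLen n α ≤ T (r, c + p) := by
  by_cases htop : stairLen n α < r + colHeight n α c
  · have := colHeight_le_stairLen (n := n) (α := α) c
    have habove : (r - 1, c + p) ∈ stairOver n α B p :=
      stair_mem_stairOver (by omega) hc (by omega)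
    have hcol := hT.2.2 (r - 1) (c + p) habove
      (by rw [Nat.sub_add_cancel (by omega)]; exact stair_mem_stairOver hr hc hrc)
    rw [Nat.sub_add_cancel (by omega), ih (r - 1) c (by omega) hc (by omega) (by omega)] at hcol
    omega
  · have := hT.1 _ (stair_mem_stairOver (B := B) (p := p) hr hc hrc)
    omega

lemma stair_entry_le (hT : IsSSYT (stairOver n α B p) T)
    (hlat : IsLattice (stairOver n α B p) T) {r c : ℕ}
    (hr : r < stairLen n α) (hc : c < n) (hrc : stairLen n α ≤ r + colHeight n α c)
    (ih : CanonicalBefore n α p T r c) :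
    T (r, c + p) ≤ r + colHeight n α c + 1 - stairLen n α := by
  have hx : (r, c + p) ∈ stairOver n α B p := stair_mem_stairOver hr hc hrc
  by_contra! hlt
  set v := T (r, c + p) with hv
  have hcount := hlat.countUpTo_le hx (v := v) (by omega)
  -- the cell below an entry `v - 1` read before `(r, c + p)` is an entry `v` read before it
  have hinj : countUpTo (stairOver n α B p) T (r, c + p) (v - 1) ≤
      #(((stairOver n α B p).filter fun y => ReadBefore (r, c + p) y ∧ T y = v).erase
        (r, c + p)) := by
    refine card_le_card_of_injOn (fun y => (y.1 + 1, y.2)) (fun y hy => ?_)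
      fun y _ z _ h => Prod.ext (by simp only [Prod.mk.injEq] at h; omega) (Prod.mk.inj h).2
    rw [mem_coe, mem_filter] at hy
    obtain ⟨hyD, hyx, hyv⟩ := hy
    have hry := fst_lt_of_readBefore hT hr hrc hyD hyx (by omega)
    obtain ⟨ry, j⟩ := y
    dsimp only at hry hyv ⊢
    obtain ⟨hpj, hjn, hyst⟩ := mem_stairOver_of_lt_stairLen hyD (by omega)
    have hyval := ih ry (j - p) (by omega) hjn hyst (Or.inl hry)
    rw [Nat.sub_add_cancel hpj, hyv] at hyval
    have hcj : c < j - p := by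
      by_contra!
      have := colHeight_mono (n := n) (α := α) this
      omega
    have hbelow := ih (ry + 1) (j - p) (by omega) hjn (by omega)
      (by rcases Nat.lt_or_ge (ry + 1) r with h | h <;> [left; right] <;> omega)
    rw [Nat.sub_add_cancel hpj] at hbelow
    have hz : (ry + 1, j - p + p) ∈ stairOver n α B p :=
      stair_mem_stairOver (by omega) hjn (by omega)
    rw [Nat.sub_add_cancel hpj] at hz
    rw [mem_coe, mem_erase, mem_filter]
    refine ⟨by simp only [ne_eq, Prod.mk.injEq]; omega, hz, ?_, by omega⟩
    dsimp only [ReadBefore]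
    omega
  have hself : (r, c + p) ∈ (stairOver n α B p).filter fun y =>
      ReadBefore (r, c + p) y ∧ T y = v :=
    mem_filter.mpr ⟨hx, Or.inr ⟨rfl, le_rfl⟩, rfl⟩
  have := card_erase_lt_of_mem hself
  unfold countUpTo at hcount hinj
  omega

/-- In a lattice SSYT, column `c` of `Δ_α` reads `1, 2, …, colHeight c` from the top. -/
theorem stair_entry_eq (hT : IsSSYT (stairOver n α B p) T)
    (hlat : IsLattice (stairOver n α B p) T) {r c : ℕ}
    (hr : r < stairLen n α) (hc : c < n) (hrc : stairLen n α ≤ r + colHeight n α c) :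
    T (r, c + p) = r + colHeight n α c + 1 - stairLen n α := by
  -- induction along the reading word, in which `(r, c + p)` is at position `r * n + (n - 1 - c)`
  induction h : r * n + (n - 1 - c) using Nat.strong_induction_on generalizing r c with
  | _ N IH =>
    have ih : CanonicalBefore n α p T r c := by
      intro r' c' hr' hc' hrc' hbefore
      refine IH _ ?_ hr' hc' hrc' rfl
      rcases hbefore with h' | ⟨rfl, h'⟩
      · have := Nat.mul_le_mul_right n (h' : r' + 1 ≤ r)
        rw [Nat.succ_mul] at this
        omega
      · omega
    exact le_antisymm (stair_entry_le hT hlat hr hc hrc ih) (le_stair_entry hT hr hc hrc ih)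

end Canonical

section FoundationRow

variable {n : ℕ} {α : ℕ → ℕ} {B : Diagram} {p : ℕ} {T : ℕ × ℕ → ℕ}

lemma filter_stair_eq_image (hT : IsSSYT (stairOver n α B p) T)
    (hlat : IsLattice (stairOver n α B p) T) {u : ℕ} (hu : 1 ≤ u) :
    (stairOver n α B p).filter (fun y => y.1 < stairLen n α ∧ T y = u) =
      ((range n).filter (u ≤ colHeight n α ·)).image
        (fun c => (stairLen n α + u - 1 - colHeight n α c, c + p)) := by
  ext ⟨r, j⟩
  simp only [mem_filter, mem_image, mem_range, Prod.mk.injEq]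
  constructor
  · rintro ⟨hy, hr, rfl⟩
    obtain ⟨hpj, hjn, hrj⟩ := mem_stairOver_of_lt_stairLen hy hr
    have := stair_entry_eq hT hlat hr hjn hrj
    rw [Nat.sub_add_cancel hpj] at this
    exact ⟨j - p, ⟨hjn, by omega⟩, by omega, by omega⟩
  · rintro ⟨c, ⟨hc, hcu⟩, rfl, rfl⟩
    have := colHeight_le_stairLen (n := n) (α := α) c
    refine ⟨stair_mem_stairOver (by omega) hc (by omega), by omega, ?_⟩
    rw [stair_entry_eq hT hlat (by omega) hc (by omega)]
    omega

lemma card_filter_stair (hT : IsSSYT (stairOver n α B p) T)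
    (hlat : IsLattice (stairOver n α B p) T) {u : ℕ} (hu : 1 ≤ u) :
    #((stairOver n α B p).filter (fun y => y.1 < stairLen n α ∧ T y = u)) =
      #((range n).filter (u ≤ colHeight n α ·)) := by
  rw [filter_stair_eq_image hT hlat hu, card_image_of_injOn]
  intro c _ c' _ h
  simp only [Prod.mk.injEq] at h
  omega

lemma countUpTo_foundation (hT : IsSSYT (stairOver n α B p) T)
    (hlat : IsLattice (stairOver n α B p) T) {u : ℕ} (hu : 1 ≤ u) (j : ℕ) :
    countUpTo (stairOver n α B p) T (stairLen n α, j) u =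
      #((range n).filter (u ≤ colHeight n α ·)) +
        #((stairOver n α B p).filter fun y => y.1 = stairLen n α ∧ j ≤ y.2 ∧ T y = u) := by
  rw [← card_filter_stair hT hlat hu, ← card_union_of_disjoint]
  · unfold countUpTo ReadBefore
    congr 1
    ext y
    simp only [mem_filter, mem_union]
    tauto
  · exact disjoint_filter.mpr fun y _ h h' => by omega

variable (hB : ∀ j j', j ≤ j' → (0, j') ∈ B → (0, j) ∈ B)
include hB

lemma foundation_row_mono (hT : IsSSYT (stairOver n α B p) T) {j j' : ℕ} (hjj' : j ≤ j')
    (hj' : (0, j') ∈ B) : T (stairLen n α, j) ≤ T (stairLen n α, j') :=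
  hT.row_mono_s14 hjj' fun t _ ht => foundation_mem_stairOver (hB t j' ht hj')

lemma card_foundation_le_card_colHeight_eq (hT : IsSSYT (stairOver n α B p) T)
    (hlat : IsLattice (stairOver n α B p) T) {j v : ℕ} (hj : (0, j) ∈ B)
    (hjv : T (stairLen n α, j) = v) (hv : 2 ≤ v) :
    #((stairOver n α B p).filter fun y => y.1 = stairLen n α ∧ j ≤ y.2 ∧ T y = v) ≤
      #((range n).filter fun c => colHeight n α c + 1 = v) := by
  -- up to `(stairLen n α, j)` the word has one `v - 1` per column of height `≥ v - 1` and
  -- one `v` per column of height `≥ v`, plus the `v`s of the foundation row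
  have hlattice := hlat.countUpTo_le (foundation_mem_stairOver (p := p) hj) (hjv ▸ hv)
  rw [hjv] at hlattice
  rw [countUpTo_foundation hT hlat (by omega), countUpTo_foundation hT hlat (by omega)]
    at hlattice
  have hrow : (stairOver n α B p).filter (fun y =>
      y.1 = stairLen n α ∧ j ≤ y.2 ∧ T y = v - 1) = ∅ := by
    refine filter_eq_empty_iff.mpr fun ⟨r, j'⟩ hy ⟨hr, hjj', hy'⟩ => ?_
    dsimp only at hr hjj' hy'
    subst hr
    rcases mem_stairOver.mp hy with h | ⟨-, h⟩
    · omega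
    have := foundation_row_mono hB hT hjj' (by simpa using h)
    omega
  have hsplit : (range n).filter (v - 1 ≤ colHeight n α ·) =
      (range n).filter (v ≤ colHeight n α ·) ∪
        (range n).filter fun c => colHeight n α c + 1 = v := by
    ext c
    simp only [mem_filter, mem_union, mem_range]
    omega
  rw [hrow, card_empty, add_zero, hsplit] at hlattice
  have := card_union_le ((range n).filter (v ≤ colHeight n α ·))
    ((range n).filter fun c => colHeight n α c + 1 = v)
  omega

lemma exists_colHeight_succ_eq_foundation_entry (hT : IsSSYT (stairOver n α B p) T)
    (hlat : IsLattice (stairOver n α B p) T) {j : ℕ} (hj : (0, j) ∈ B)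
    (hv : 2 ≤ T (stairLen n α, j)) :
    ∃ c < n, colHeight n α c + 1 = T (stairLen n α, j) := by
  have hself : (stairLen n α, j) ∈ (stairOver n α B p).filter fun y =>
      y.1 = stairLen n α ∧ j ≤ y.2 ∧ T y = T (stairLen n α, j) :=
    mem_filter.mpr ⟨foundation_mem_stairOver hj, rfl, le_rfl, rfl⟩
  obtain ⟨c, hc⟩ := card_pos.mp <| (card_pos.mpr ⟨_, hself⟩).trans_le
    (card_foundation_le_card_colHeight_eq hB hT hlat hj rfl hv)
  simp only [mem_filter, mem_range] at hc
  exact ⟨c, hc⟩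

lemma foundation_entry_lt_succ (hα : IsComposition n α) (hT : IsSSYT (stairOver n α B p) T)
    (hlat : IsLattice (stairOver n α B p) T) {j : ℕ} (hj : (0, j + 1) ∈ B)
    (hv : 2 ≤ T (stairLen n α, j)) : T (stairLen n α, j) < T (stairLen n α, j + 1) := by
  have hmono := foundation_row_mono hB hT (Nat.le_add_right j 1) hj
  by_contra! hle
  have hpair : {(stairLen n α, j), (stairLen n α, j + 1)} ⊆ (stairOver n α B p).filter
      fun y => y.1 = stairLen n α ∧ j ≤ y.2 ∧ T y = T (stairLen n α, j) := by
    intro y hy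
    rcases mem_insert.mp hy with rfl | hy
    · exact mem_filter.mpr
        ⟨foundation_mem_stairOver (hB j _ (Nat.le_add_right j 1) hj), rfl, le_rfl, rfl⟩
    · rw [mem_singleton.mp hy]
      exact mem_filter.mpr ⟨foundation_mem_stairOver hj, rfl, Nat.le_add_right j 1, by omega⟩
  have hcols : #((range n).filter fun c => colHeight n α c + 1 = T (stairLen n α, j)) ≤ 1 :=
    card_le_one.mpr fun c hc c' hc' => by
      simp only [mem_filter, mem_range] at hc hc'
      exact (colHeight_strictMonoOn hα).injOn hc.1 hc'.1 (by omega)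
  have := (card_le_card hpair).trans
    (card_foundation_le_card_colHeight_eq hB hT hlat (hB j _ (Nat.le_add_right j 1) hj) rfl hv)
  rw [card_pair (by simp)] at this
  omega

lemma two_le_foundation_entry (hα : IsComposition n α) (hT : IsSSYT (stairOver n α B p) T)
    (hlat : IsLattice (stairOver n α B p) T) {k : ℕ}
    (hcont : content (stairOver n α B p) T 1 ≤ n + k) {j : ℕ} (hj : (0, j) ∈ B) (hkj : k ≤ j) :
    2 ≤ T (stairLen n α, j) := by
  -- each of the `n` columns of `Δ_α` holds a `1`, leaving at most `k` for the foundation row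
  by_contra! hlt
  have hone : ∀ j' ≤ j, T (stairLen n α, j') = 1 := fun j' hj' => by
    have := hT.1 _ (foundation_mem_stairOver (p := p) (hB j' j hj' hj))
    have := foundation_row_mono hB hT hj' hj
    omega
  have hstair : (range n).filter (1 ≤ colHeight n α ·) = range n :=
    filter_true_of_mem fun c hc => colHeight_pos hα (mem_range.mp hc)
  have hrow : (range (j + 1)).image (fun j' => (stairLen n α, j')) ⊆ (stairOver n α B p).filter
      fun y => y.1 = stairLen n α ∧ 0 ≤ y.2 ∧ T y = 1 := by
    intro y hy
    obtain ⟨j', hj', rfl⟩ := mem_image.mp hy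
    have hj' : j' ≤ j := Nat.lt_succ_iff.mp (mem_range.mp hj')
    exact mem_filter.mpr
      ⟨foundation_mem_stairOver (hB j' j hj' hj), rfl, Nat.zero_le _, hone j' hj'⟩
  have hupTo : countUpTo (stairOver n α B p) T (stairLen n α, 0) 1 ≤
      content (stairOver n α B p) T 1 :=
    card_le_card (monotone_filter_right _ fun _ _ h => h.2)
  rw [countUpTo_foundation hT hlat le_rfl, hstair, card_range] at hupTo
  have := card_le_card hrow
  rw [card_image_of_injective _ (fun _ _ h => (Prod.mk.inj h).2), card_range] at this
  omega

lemma colHeight_succ_le_foundation_entry (hα : IsComposition n α)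
    (hT : IsSSYT (stairOver n α B p) T) (hlat : IsLattice (stairOver n α B p) T) {k : ℕ}
    (hcont : content (stairOver n α B p) T 1 ≤ n + k) {j : ℕ} (hj : (0, j) ∈ B) (hkj : k ≤ j) :
    colHeight n α (j - k) + 1 ≤ T (stairLen n α, j) := by
  have key : ∀ t, (0, k + t) ∈ B →
      ∃ c, t ≤ c ∧ c < n ∧ colHeight n α c + 1 = T (stairLen n α, k + t) := by
    intro t
    induction t with
    | zero =>
      intro h
      obtain ⟨c, hc, hcT⟩ := exists_colHeight_succ_eq_foundation_entry hB hT hlat h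
        (two_le_foundation_entry hB hα hT hlat hcont h (by omega))
      exact ⟨c, Nat.zero_le _, hc, hcT⟩
    | succ t ih =>
      intro h
      rw [← add_assoc] at h ⊢
      have h' : (0, k + t) ∈ B := hB (k + t) (k + t + 1) (Nat.le_add_right _ 1) h
      obtain ⟨c, htc, -, hcT⟩ := ih h'
      have hlt := foundation_entry_lt_succ hB hα hT hlat h
        (two_le_foundation_entry hB hα hT hlat hcont h' (by omega))
      obtain ⟨c', hc', hcT'⟩ := exists_colHeight_succ_eq_foundation_entry hB hT hlat h
        (two_le_foundation_entry hB hα hT hlat hcont h (by omega))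
      have : c < c' := (colHeight_mono (n := n) (α := α)).reflect_lt (by omega)
      exact ⟨c', by omega, hc', hcT'⟩
  obtain ⟨c, htc, -, hcT⟩ := key (j - k) (by rwa [Nat.add_sub_cancel' hkj])
  rw [Nat.add_sub_cancel' hkj] at hcT
  have := colHeight_mono (n := n) (α := α) htc
  omega

end FoundationRow

section Shift

variable {n : ℕ} {α : ℕ → ℕ} {B : Diagram} {p q : ℕ}

def shiftTop (L p q : ℕ) (y : ℕ × ℕ) : ℕ × ℕ := if y.1 < L then (y.1, y.2 - q + p) else y

/-- Move the entries in the rows above row `L` from column offset `p` to column offset `q`. -/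
def shiftFilling (L p q : ℕ) (T : ℕ × ℕ → ℕ) (x : ℕ × ℕ) : ℕ :=
  if x.1 < L ∧ x.2 < q then 0 else T (shiftTop L p q x)

lemma shiftTop_mem {y : ℕ × ℕ} (hy : y ∈ stairOver n α B q) :
    shiftTop (stairLen n α) p q y ∈ stairOver n α B p := by
  unfold shiftTop
  split_ifs with h
  · obtain ⟨-, hjn, hyst⟩ := mem_stairOver_of_lt_stairLen hy h
    exact stair_mem_stairOver h hjn hyst
  · rcases mem_stairOver.mp hy with h' | h'
    · exact absurd h'.1 h
    · exact mem_stairOver.mpr (Or.inr h')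

lemma shiftTop_shiftTop {L : ℕ} {y : ℕ × ℕ} (hy : y.1 < L → q ≤ y.2) :
    shiftTop L q p (shiftTop L p q y) = y := by
  unfold shiftTop
  split_ifs with h
  · exact Prod.ext rfl (by simp only; have := hy h; omega)
  · rfl

lemma shiftTop_shiftTop_of_mem {y : ℕ × ℕ} (hy : y ∈ stairOver n α B q) :
    shiftTop (stairLen n α) q p (shiftTop (stairLen n α) p q y) = y :=
  shiftTop_shiftTop fun h => (mem_stairOver_of_lt_stairLen hy h).1

lemma image_shiftTop :
    (stairOver n α B q).image (shiftTop (stairLen n α) p q) = stairOver n α B p := by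
  refine (image_subset_iff.mpr fun y hy => shiftTop_mem hy).antisymm fun y hy => ?_
  exact mem_image.mpr ⟨_, shiftTop_mem hy, shiftTop_shiftTop_of_mem hy⟩

lemma shiftTop_injOn :
    Set.InjOn (shiftTop (stairLen n α) p q) (stairOver n α B q) := fun y hy z hz h => by
  rw [← shiftTop_shiftTop_of_mem (p := p) hy, ← shiftTop_shiftTop_of_mem (p := p) hz, h]

lemma shiftFilling_apply {T : ℕ × ℕ → ℕ} {y : ℕ × ℕ} (hy : y ∈ stairOver n α B q) :
    shiftFilling (stairLen n α) p q T y = T (shiftTop (stairLen n α) p q y) := by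
  rw [shiftFilling, if_neg]
  rintro ⟨h1, h2⟩
  have := (mem_stairOver_of_lt_stairLen hy h1).1
  omega

lemma readBefore_shiftTop_iff {x y : ℕ × ℕ} (hx : x ∈ stairOver n α B q)
    (hy : y ∈ stairOver n α B q) :
    ReadBefore (shiftTop (stairLen n α) p q x) (shiftTop (stairLen n α) p q y) ↔
      ReadBefore x y := by
  have hqx := fun h => (mem_stairOver_of_lt_stairLen hx h).1
  have hqy := fun h => (mem_stairOver_of_lt_stairLen hy h).1
  unfold shiftTop ReadBefore
  split_ifs with h1 h2 h2 <;> simp only at * <;> omega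

lemma card_filter_shiftFilling {T : ℕ × ℕ → ℕ} {v : ℕ} (φ ψ : ℕ × ℕ → Prop)
    (hφψ : ∀ y ∈ stairOver n α B q, φ y ↔ ψ (shiftTop (stairLen n α) p q y)) :
    #((stairOver n α B q).filter fun y => φ y ∧ shiftFilling (stairLen n α) p q T y = v) =
      #((stairOver n α B p).filter fun y => ψ y ∧ T y = v) := by
  rw [← image_shiftTop (p := p) (q := q), filter_image, card_image_of_injOn
    (shiftTop_injOn.mono (coe_subset.mpr (filter_subset _ _)))]
  exact congrArg card (filter_congr fun y hy => by rw [hφψ y hy, shiftFilling_apply hy])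

variable {T : ℕ × ℕ → ℕ}

lemma isSSYT_shiftFilling (hT : IsSSYT (stairOver n α B p) T)
    (hjunction : ∀ i j, i + 1 = stairLen n α → (i, j) ∈ stairOver n α B q →
      (i + 1, j) ∈ stairOver n α B q → T (i, j - q + p) < T (i + 1, j)) :
    IsSSYT (stairOver n α B q) (shiftFilling (stairLen n α) p q T) := by
  refine ⟨fun x hx => ?_, fun i j h h' => ?_, fun i j h h' => ?_⟩
  · rw [shiftFilling_apply hx]
    exact hT.1 _ (shiftTop_mem hx)
  · rw [shiftFilling_apply h, shiftFilling_apply h']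
    have h1 := shiftTop_mem (p := p) h
    have h2 := shiftTop_mem (p := p) h'
    by_cases hi : i < stairLen n α
    · have := (mem_stairOver_of_lt_stairLen h hi).1
      simp only [shiftTop, if_pos hi] at h1 h2 ⊢
      rw [show j + 1 - q + p = j - q + p + 1 by omega] at h2 ⊢
      exact hT.2.1 _ _ h1 h2
    · simp only [shiftTop, if_neg hi] at h1 h2 ⊢
      exact hT.2.1 _ _ h1 h2
  · rw [shiftFilling_apply h, shiftFilling_apply h']
    by_cases hi : i + 1 < stairLen n α
    · have hcol := hT.2.2 i (j - q + p)
      have := (mem_stairOver_of_lt_stairLen h (by omega)).1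
      have h1 := shiftTop_mem (p := p) h
      have h2 := shiftTop_mem (p := p) h'
      simp only [shiftTop, if_pos hi, if_pos (show i < stairLen n α by omega)] at h1 h2 ⊢
      exact hcol h1 h2
    · by_cases hi' : i < stairLen n α
      · simp only [shiftTop, if_neg hi, if_pos hi']
        exact hjunction i j (by omega) h h'
      · have h1 := shiftTop_mem (p := p) h
        have h2 := shiftTop_mem (p := p) h'
        simp only [shiftTop, if_neg hi, if_neg hi'] at h1 h2 ⊢
        exact hT.2.2 i j h1 h2

lemma shiftFilling_mem_latticeSSYTs {cc : ℕ → ℕ} (hT : T ∈ LatticeSSYTs (stairOver n α B p) cc)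
    (hjunction : ∀ i j, i + 1 = stairLen n α → (i, j) ∈ stairOver n α B q →
      (i + 1, j) ∈ stairOver n α B q → T (i, j - q + p) < T (i + 1, j)) :
    shiftFilling (stairLen n α) p q T ∈ LatticeSSYTs (stairOver n α B q) cc := by
  obtain ⟨⟨hssyt, hzero, hcont⟩, hlat⟩ := hT
  refine ⟨⟨isSSYT_shiftFilling hssyt hjunction, fun x hx => ?_, ?_⟩, fun x hx v => ?_⟩
  · unfold shiftFilling
    split_ifs with h
    · rfl
    refine hzero _ fun hx' => hx ?_
    rw [← shiftTop_shiftTop (L := stairLen n α) (p := p) (q := q) (y := x) (by omega)]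
    exact shiftTop_mem hx'
  · funext v
    rw [← hcont]
    unfold content
    simpa using card_filter_shiftFilling (T := T) (v := v) (fun _ => True) (fun _ => True)
      (fun _ _ => Iff.rfl)
  · have h := fun w => card_filter_shiftFilling (T := T) (v := w) (ReadBefore x)
      (ReadBefore (shiftTop (stairLen n α) p q x)) fun y hy => (readBefore_shiftTop_iff hx hy).symm
    rw [h, h]
    exact hlat _ (shiftTop_mem hx) v

lemma shiftFilling_shiftFilling (hT : ∀ x ∉ stairOver n α B p, T x = 0) :
    shiftFilling (stairLen n α) q p (shiftFilling (stairLen n α) p q T) = T := by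
  funext x
  by_cases hx : x.1 < stairLen n α ∧ x.2 < p
  · rw [shiftFilling, if_pos hx, hT]
    exact fun h => by have := (mem_stairOver_of_lt_stairLen h hx.1).1; omega
  · have hback := shiftTop_shiftTop (L := stairLen n α) (p := q) (q := p) (y := x) (by omega)
    rw [shiftFilling, if_neg hx, shiftFilling, if_neg, hback]
    unfold shiftTop
    split_ifs <;> simp only [not_and, not_lt] <;> omega

end Shift

section Count

variable {n : ℕ} {α : ℕ → ℕ} {B : Diagram}

lemma stair_lt_foundation (hα : IsComposition n α)
    (hB : ∀ j j', j ≤ j' → (0, j') ∈ B → (0, j) ∈ B) {w k : ℕ} {cc : ℕ → ℕ}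
    (hcc : cc 1 ≤ n + k) {T : ℕ × ℕ → ℕ} (hT : T ∈ LatticeSSYTs (stairOver n α B w) cc)
    {i j : ℕ} (hi : i + 1 = stairLen n α) (hstair : (i, j) ∈ stairOver n α B k)
    (hfound : (i + 1, j) ∈ stairOver n α B k) : T (i, j - k + w) < T (i + 1, j) := by
  obtain ⟨⟨hssyt, -, hcont⟩, hlat⟩ := hT
  obtain ⟨hkj, hjn, hij⟩ := mem_stairOver_of_lt_stairLen hstair (by omega)
  have hbottom := stair_entry_eq hssyt hlat (by omega) hjn hij
  rcases mem_stairOver.mp hfound with h | ⟨-, h⟩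
  · omega
  have := colHeight_succ_le_foundation_entry hB hα hssyt hlat (hcont ▸ hcc)
    (by simpa [hi] using h) hkj
  rw [hi]
  omega

theorem lrCount_stairOver_eq (hα : IsComposition n α)
    (hB : ∀ j j', j ≤ j' → (0, j') ∈ B → (0, j) ∈ B) {w : ℕ} (hw : ∀ j, (0, j) ∈ B → j < w)
    {k : ℕ} {cc : ℕ → ℕ} (hcc : cc 1 ≤ n + k) :
    lrCount (stairOver n α B w) cc = lrCount (stairOver n α B k) cc := by
  have himage : LatticeSSYTs (stairOver n α B k) cc =
      shiftFilling (stairLen n α) w k '' LatticeSSYTs (stairOver n α B w) cc := by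
    refine Set.Subset.antisymm (fun T hT => ⟨_, shiftFilling_mem_latticeSSYTs hT ?_,
      shiftFilling_shiftFilling hT.1.2.1⟩) ?_
    · intro i j hi hstair hfound
      have := (mem_stairOver_of_lt_stairLen hstair (by omega)).1
      rcases mem_stairOver.mp hfound with h | ⟨-, h⟩
      · omega
      · have := hw j (by simpa [hi] using h)
        omega
    · rintro _ ⟨T, hT, rfl⟩
      exact shiftFilling_mem_latticeSSYTs hT fun i j hi =>
        stair_lt_foundation hα hB hcc hT hi
  unfold lrCount
  rw [himage]
  refine (Set.InjOn.ncard_image fun T hT T' hT' h => ?_).symm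
  rw [← shiftFilling_shiftFilling (q := k) hT.1.2.1, h, shiftFilling_shiftFilling hT'.1.2.1]

end Count

lemma dsumS_eq_stairOver (n : ℕ) (α : ℕ → ℕ) (m : ℕ) (lam : ℕ → ℕ) :
    dsumS n α m lam = stairOver n α (partCells m lam) (lam 0) := rfl

lemma shapeS_eq_stairOver (n : ℕ) (α : ℕ → ℕ) (m : ℕ) (lam : ℕ → ℕ) (k : ℕ) :
    shapeS n α m lam k = stairOver n α (partCells m lam) k := rfl

lemma zero_mem_partCells_iff {m : ℕ} {lam : ℕ → ℕ} {j : ℕ} :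
    (0, j) ∈ partCells m lam ↔ 0 < m ∧ j < lam 0 := by
  simp only [partCells, mem_filter, mem_product, mem_range]
  tauto

theorem trunc_dsum_eq_shapeS_general (n k : ℕ) (α : ℕ → ℕ) (hα : IsComposition n α)
    (m : ℕ) (lam : ℕ → ℕ) (l : ℕ) (c : ℕ → ℕ) :
    truncComplement l (n + k) (fun ν => lrCount (dsumS n α m lam) (partContent ν)) c =
      truncComplement l (n + k)
        (fun ν => lrCount (shapeS n α m lam k) (partContent ν)) c := by
  refine sum_congr rfl fun ν _ => ?_
  have hν : partContent (extFun l (n + k) ν) 1 ≤ n + k := by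
    simp only [partContent, extFun]
    split_ifs <;> omega
  have hrow : ∀ j j', j ≤ j' → (0, j') ∈ partCells m lam → (0, j) ∈ partCells m lam :=
    fun j j' hjj' h => by
      rw [zero_mem_partCells_iff] at h ⊢
      omega
  simp only [dsumS_eq_stairOver, shapeS_eq_stairOver, lrCount_stairOver_eq hα hrow
    (fun j h => (zero_mem_partCells_iff.mp h).2) hν]

/-- For `0 ≤ k ≤ 1` and complementation in any rectangle of width
`w = n + k`, `c(s_λ · s_{Δ_α}) = c(s_{S(λ,α;k)})`. -/
theorem trunc_dsum_eq_shapeS (n k : ℕ) (α : ℕ → ℕ) (hα : IsComposition n α)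
    (hk : k ≤ 1) (m : ℕ) (lam : ℕ → ℕ) (hanti : Antitone lam)
    (hm : ∀ i, m ≤ i → lam i = 0) (hval : lam 0 ≤ n + k)
    (l : ℕ) (c : ℕ → ℕ) :
    truncComplement l (n + k) (fun ν => lrCount (dsumS n α m lam) (partContent ν)) c =
      truncComplement l (n + k)
        (fun ν => lrCount (shapeS n α m lam k) (partContent ν)) c :=
  trunc_dsum_eq_shapeS_general n k α hα m lam l c

end SchurStair
end
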